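/- For every real x ≥ 0, the standard normal tail satisfies (1/(√(2π)(1+x))) · exp(-x²/2) ≤ 1 - Φ(x) ≤ (1/(√π (1+x))) · exp(-x²/2), where Φ is the standard normal CDF. -/

import Mathlib

open Real MeasureTheory

/-- The standard normal cumulative distribution function. -/
noncomputable def stdNormalCDF (x : ℝ) : ℝ :=
  ∫ t in Set.Iic x, (Real.sqrt (2 * Real.pi))⁻¹ * Real.exp (-t ^ 2 / 2)

/-!
The function `F t = e^{-t²/2} / (1 + t)` satisfies `-F' t = e^{-t²/2} · r t` with
`r t = (t² + t + 1) / (1 + t)²`, so `∫_x^∞ e^{-t²/2} r t dt = F x` for `x > -1`.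
Since `3/4 ≤ r t` for all `t ≠ -1` and `r t ≤ 1` for `t ≥ 0`, the Gaussian tail
`∫_x^∞ e^{-t²/2} dt` lies between `F x` and `(4/3) F x`; the theorem follows from
`4/3 ≤ √2` after normalising by `√(2π)`.
-/

open Set Filter Topology

lemma integrable_exp_neg_sq_div_two : Integrable fun t : ℝ => exp (-t ^ 2 / 2) := by
  simpa [neg_div, div_eq_inv_mul] using integrable_exp_neg_mul_sq (b := 1 / 2) (by norm_num)

lemma integral_exp_neg_sq_div_two : ∫ t : ℝ, exp (-t ^ 2 / 2) = √(2 * π) := by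
  have := integral_gaussian (1 / 2)
  rw [show π / (1 / 2) = 2 * π by ring] at this
  simpa [neg_div, div_eq_inv_mul] using this

lemma one_sub_stdNormalCDF_eq_integral_Ioi (x : ℝ) :
    1 - stdNormalCDF x = (√(2 * π))⁻¹ * ∫ t in Ioi x, exp (-t ^ 2 / 2) := by
  have hsplit := intervalIntegral.integral_Iic_add_Ioi (b := x)
    integrable_exp_neg_sq_div_two.integrableOn integrable_exp_neg_sq_div_two.integrableOn
  rw [integral_exp_neg_sq_div_two] at hsplit
  have hnorm := congrArg ((√(2 * π))⁻¹ * ·) hsplit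
  simp only [mul_add, inv_mul_cancel₀ (by positivity : √(2 * π) ≠ 0)] at hnorm
  rw [stdNormalCDF, integral_const_mul]
  linarith

lemma hasDerivAt_neg_exp_neg_sq_div_two_div_one_add {t : ℝ} (ht : 1 + t ≠ 0) :
    HasDerivAt (fun t : ℝ => -(exp (-t ^ 2 / 2) / (1 + t)))
      (exp (-t ^ 2 / 2) * ((t ^ 2 + t + 1) / (1 + t) ^ 2)) t := by
  have hexp : HasDerivAt (fun t : ℝ => exp (-t ^ 2 / 2)) (exp (-t ^ 2 / 2) * (-t)) t := by
    have hq : HasDerivAt (fun t : ℝ => -t ^ 2 / 2) (-t) t := by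
      refine ((hasDerivAt_pow 2 t).neg.div_const 2).congr_deriv ?_
      push_cast
      ring
    exact hq.exp
  have hden : HasDerivAt (fun t : ℝ => 1 + t) 1 t := (hasDerivAt_id t).const_add 1
  refine (hexp.div hden ht).neg.congr_deriv ?_
  field_simp
  ring

lemma tendsto_exp_neg_sq_div_two_div_one_add_atTop :
    Tendsto (fun t : ℝ => exp (-t ^ 2 / 2) / (1 + t)) atTop (𝓝 0) := by
  have hexp : Tendsto (fun t : ℝ => exp (-t ^ 2 / 2)) atTop (𝓝 0) :=
    tendsto_exp_atBot.comp <| (tendsto_neg_atBot_iff.mpr (tendsto_pow_atTop two_ne_zero)).atBot_div_const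
      two_pos
  have hden : Tendsto (fun t : ℝ => (1 + t)⁻¹) atTop (𝓝 0) :=
    (tendsto_atTop_add_const_left _ 1 tendsto_id).inv_tendsto_atTop
  simpa [div_eq_mul_inv] using hexp.mul hden

lemma three_quarters_le_div_sq_one_add {t : ℝ} (ht : 1 + t ≠ 0) :
    3 / 4 ≤ (t ^ 2 + t + 1) / (1 + t) ^ 2 := by
  rw [le_div_iff₀ (by positivity)]
  nlinarith [sq_nonneg (t - 1)]

lemma div_sq_one_add_le_one {t : ℝ} (ht : 0 ≤ t) : (t ^ 2 + t + 1) / (1 + t) ^ 2 ≤ 1 := by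
  rw [div_le_one (by positivity)]
  nlinarith

lemma div_sq_one_add_nonneg (t : ℝ) : 0 ≤ (t ^ 2 + t + 1) / (1 + t) ^ 2 :=
  div_nonneg (by nlinarith [sq_nonneg (t + 1 / 2)]) (sq_nonneg _)

lemma integrableOn_Ioi_exp_neg_sq_div_two_mul_div_sq_one_add {x : ℝ} (hx : -1 < x) :
    IntegrableOn (fun t : ℝ => exp (-t ^ 2 / 2) * ((t ^ 2 + t + 1) / (1 + t) ^ 2)) (Ioi x) :=
  integrableOn_Ioi_deriv_of_nonneg'
    (fun t ht => hasDerivAt_neg_exp_neg_sq_div_two_div_one_add (by linarith [ht.out]))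
    (fun t _ => mul_nonneg (exp_pos _).le (div_sq_one_add_nonneg t))
    (by simpa using tendsto_exp_neg_sq_div_two_div_one_add_atTop.neg)

lemma integral_Ioi_exp_neg_sq_div_two_mul_div_sq_one_add {x : ℝ} (hx : -1 < x) :
    ∫ t in Ioi x, exp (-t ^ 2 / 2) * ((t ^ 2 + t + 1) / (1 + t) ^ 2) =
      exp (-x ^ 2 / 2) / (1 + x) := by
  rw [integral_Ioi_of_hasDerivAt_of_tendsto'
    (fun t ht => hasDerivAt_neg_exp_neg_sq_div_two_div_one_add (by linarith [ht.out]))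
    (integrableOn_Ioi_exp_neg_sq_div_two_mul_div_sq_one_add hx)
    (by simpa using tendsto_exp_neg_sq_div_two_div_one_add_atTop.neg)]
  ring

lemma integral_Ioi_exp_neg_sq_div_two_le {x : ℝ} (hx : -1 < x) :
    ∫ t in Ioi x, exp (-t ^ 2 / 2) ≤ 4 / 3 * (exp (-x ^ 2 / 2) / (1 + x)) := by
  rw [← integral_Ioi_exp_neg_sq_div_two_mul_div_sq_one_add hx, ← integral_const_mul]
  refine setIntegral_mono_on integrable_exp_neg_sq_div_two.integrableOn
    ((integrableOn_Ioi_exp_neg_sq_div_two_mul_div_sq_one_add hx).const_mul _) measurableSet_Ioi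
    fun t ht => ?_
  have hr := three_quarters_le_div_sq_one_add (t := t) (by linarith [ht.out])
  nlinarith [exp_pos (-t ^ 2 / 2)]

lemma exp_neg_sq_div_two_div_one_add_le_integral_Ioi {x : ℝ} (hx : 0 ≤ x) :
    exp (-x ^ 2 / 2) / (1 + x) ≤ ∫ t in Ioi x, exp (-t ^ 2 / 2) := by
  have hx' : -1 < x := by linarith
  rw [← integral_Ioi_exp_neg_sq_div_two_mul_div_sq_one_add hx']
  refine setIntegral_mono_on (integrableOn_Ioi_exp_neg_sq_div_two_mul_div_sq_one_add hx')
    integrable_exp_neg_sq_div_two.integrableOn measurableSet_Ioi fun t ht => ?_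
  exact mul_le_of_le_one_right (exp_pos _).le (div_sq_one_add_le_one (hx.trans ht.out.le))

lemma four_thirds_div_sqrt_two_le_one : 4 / 3 / √2 ≤ 1 :=
  (div_le_one (by positivity)).mpr ((le_sqrt' (by norm_num)).mpr (by norm_num))

/-- Two-sided Gaussian tail bound: for `x ≥ 0`,
`(1/(√(2π)(1+x))) e^{-x²/2} ≤ 1 - Φ(x) ≤ (1/(√π (1+x))) e^{-x²/2}`. -/
theorem stmt0 (x : ℝ) (hx : 0 ≤ x) :
    (Real.sqrt (2 * Real.pi) * (1 + x))⁻¹ * Real.exp (-x ^ 2 / 2) ≤ 1 - stdNormalCDF x ∧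
    1 - stdNormalCDF x ≤ (Real.sqrt Real.pi * (1 + x))⁻¹ * Real.exp (-x ^ 2 / 2) := by
  rw [one_sub_stdNormalCDF_eq_integral_Ioi]
  have hlower := exp_neg_sq_div_two_div_one_add_le_integral_Ioi hx
  have hupper := integral_Ioi_exp_neg_sq_div_two_le (by linarith : -1 < x)
  have hc : 0 ≤ (√(2 * π))⁻¹ := by positivity
  constructor
  · calc (√(2 * π) * (1 + x))⁻¹ * exp (-x ^ 2 / 2)
        = (√(2 * π))⁻¹ * (exp (-x ^ 2 / 2) / (1 + x)) := by field_simp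
      _ ≤ _ := mul_le_mul_of_nonneg_left hlower hc
  · calc (√(2 * π))⁻¹ * ∫ t in Ioi x, exp (-t ^ 2 / 2)
        ≤ (√(2 * π))⁻¹ * (4 / 3 * (exp (-x ^ 2 / 2) / (1 + x))) :=
          mul_le_mul_of_nonneg_left hupper hc
      _ = 4 / 3 / √2 * ((√π * (1 + x))⁻¹ * exp (-x ^ 2 / 2)) := by
          rw [sqrt_mul (by norm_num)]; field_simp
      _ ≤ (√π * (1 + x))⁻¹ * exp (-x ^ 2 / 2) :=
          mul_le_of_le_one_left (by positivity) four_thirds_div_sqrt_two_le_one
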